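/- arXiv:2410.15538 — 2 statements merged into one kernel-verified Lean document; each statement's English description precedes it below -/
import Mathlib

section
/- Let F be a field of characteristic ≠ 2. The F-algebra A(0₃) (commutative, generated by X_1, X_2, X_3 with X_i² = 0 for all i) is not isomorphic, by any graded-degree-preserving algebra isomorphism (equivalently, by any isomorphism induced by an invertible linear map on the span of the generators), to the algebra A(B_{3,2}) generated by Y_1, Y_2, Y_3 with relations Y_1² = Y_2² = 0 and Y_3² = Y_1 Y_3 + Y_2 Y_3. -/
open scoped BigOperators

noncomputable section

variable {F : Type} [Field F]

/-- `T` is strictly lower triangular. -/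
def SLT {n : ℕ} (T : Matrix (Fin n) (Fin n) F) : Prop :=
  ∀ i j : Fin n, i ≤ j → T i j = 0

/-- The ideal of relations defining the nil graded algebra `A(T)`:
`X i ^ 2 = ∑ j < i, T i j * X j * X i` (for `i = 0` the sum is empty, giving `X 0 ^ 2 = 0`). -/
def ntIdeal {n : ℕ} (T : Matrix (Fin n) (Fin n) F) : Ideal (MvPolynomial (Fin n) F) :=
  Ideal.span {p | ∃ i : Fin n,
    p = MvPolynomial.X i ^ 2 -
      ∑ j ∈ Finset.univ.filter (fun j => j < i),
        MvPolynomial.C (T i j) * MvPolynomial.X j * MvPolynomial.X i}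

/-- The nil graded algebra `A(T)` associated to the strictly lower triangular matrix `T`. -/
abbrev NTAlg {n : ℕ} (T : Matrix (Fin n) (Fin n) F) : Type :=
  MvPolynomial (Fin n) F ⧸ ntIdeal T

/-- The generator `X i` of `A(T)`. -/
def ntGen {n : ℕ} (T : Matrix (Fin n) (Fin n) F) (i : Fin n) : NTAlg T :=
  Ideal.Quotient.mk (ntIdeal T) (MvPolynomial.X i)

/-- There is a degree-preserving isomorphism `A(T) → A(S)`, i.e. an algebra isomorphism
sending each generator to an `F`-linear combination of the generators of the target. -/
def NTIso {n : ℕ} (T S : Matrix (Fin n) (Fin n) F) : Prop :=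
  ∃ e : NTAlg T ≃ₐ[F] NTAlg S, ∃ Γ : Matrix (Fin n) (Fin n) F,
    ∀ j : Fin n, e (ntGen T j) = ∑ i : Fin n, Γ i j • ntGen S i

/-- The matrix `B_{3,2}` with entries 1 in positions (3,1) and (3,2) (1-based). -/
def B32 : Matrix (Fin 3) (Fin 3) F :=
  !![0, 0, 0; 0, 0, 0; 1, 1, 0]

/-! If `e` sends `X j` to `∑ i, Γ i j • Y i`, then `(∑ i, Γ i j • Y i) ^ 2 = 0`. Writing
`c i = Γ i j`, the square is
`2 c₀ c₁ • Y₀Y₁ + c₂ (2 c₀ + c₂) • Y₀Y₂ + c₂ (2 c₁ + c₂) • Y₁Y₂`,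
and the three monomials are independent, as homomorphisms into `F[ε][δ]` sending the `Y i` to
combinations of `ε` and `δ` show. Since `2 ≠ 0` this forces `c₂ = 0`, so `e` maps every
generator into the span of `Y₀, Y₁`. The homomorphism `A(B_{3,2}) → F[ε]` with `Y₀, Y₁ ↦ 0`,
`Y₂ ↦ ε` then kills `e (X j)` for all `j`, so it takes only scalar values on the image of `e`,
which is everything; but it hits `ε`. -/

theorem ntGen_sq {n : ℕ} (T : Matrix (Fin n) (Fin n) F) (i : Fin n) :
    ntGen T i ^ 2 = ∑ j ∈ Finset.univ.filter (· < i), T i j • (ntGen T j * ntGen T i) := by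
  have hmem : MvPolynomial.X i ^ 2 - ∑ j ∈ Finset.univ.filter (· < i),
      MvPolynomial.C (T i j) * MvPolynomial.X j * MvPolynomial.X i ∈ ntIdeal T :=
    Ideal.subset_span ⟨i, rfl⟩
  have h : Ideal.Quotient.mkₐ F (ntIdeal T) _ = 0 := Ideal.Quotient.eq_zero_iff_mem.mpr hmem
  simp only [MvPolynomial.C_mul', smul_mul_assoc, map_sub, map_pow, map_sum, map_smul, map_mul]
    at h
  exact sub_eq_zero.mp h

namespace NTAlg

variable {n : ℕ} (T : Matrix (Fin n) (Fin n) F) {A : Type*} [CommRing A] [Algebra F A]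

def lift (y : Fin n → A)
    (hy : ∀ i, y i ^ 2 = ∑ j ∈ Finset.univ.filter (· < i), T i j • (y j * y i)) :
    NTAlg T →ₐ[F] A :=
  Ideal.Quotient.liftₐ (ntIdeal T) (MvPolynomial.aeval y) fun a ha => by
    refine (Submodule.span_le (p := RingHom.ker (MvPolynomial.aeval y : _ →ₐ[F] A))).2 ?_
      ha
    rintro p ⟨i, rfl⟩
    simp [hy i, Algebra.smul_def, mul_assoc]

@[simp]
theorem lift_ntGen (y : Fin n → A)
    (hy : ∀ i, y i ^ 2 = ∑ j ∈ Finset.univ.filter (· < i), T i j • (y j * y i)) (i : Fin n) :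
    lift T y hy (ntGen T i) = y i :=
  MvPolynomial.aeval_X y i

theorem mem_bot_of_forall_ntGen_eq_zero (φ : NTAlg T →ₐ[F] A) (hφ : ∀ i, φ (ntGen T i) = 0)
    (x : NTAlg T) : φ x ∈ (⊥ : Subalgebra F A) := by
  obtain ⟨p, rfl⟩ := Ideal.Quotient.mk_surjective x
  have h : φ.comp (Ideal.Quotient.mkₐ F (ntIdeal T)) = MvPolynomial.aeval 0 := by
    ext i
    simpa [ntGen] using hφ i
  rw [Algebra.mem_bot]
  exact ⟨_, (MvPolynomial.aeval_zero p).symm.trans (congrArg (· p) h).symm⟩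

end NTAlg

theorem B32_relations {A : Type*} [CommRing A] [Algebra F A] {y : Fin 3 → A}
    (h0 : y 0 ^ 2 = 0) (h1 : y 1 ^ 2 = 0) (h2 : y 2 ^ 2 = y 0 * y 2 + y 1 * y 2) (i : Fin 3) :
    y i ^ 2 = ∑ j ∈ Finset.univ.filter (· < i), B32 (F := F) i j • (y j * y i) := by
  fin_cases i <;> simp [Finset.sum_filter, Fin.sum_univ_three, B32, *]

theorem DualNumber.eps_notMem_bot {R : Type*} [CommSemiring R] [Nontrivial R] :
    (DualNumber.eps : DualNumber R) ∉ (⊥ : Subalgebra R (DualNumber R)) := by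
  rintro ⟨r, hr⟩
  simpa [TrivSqZeroExt.algebraMap_eq_inl] using congrArg TrivSqZeroExt.snd hr

theorem smul_add_smul_mul_smul_add_smul {R : Type*} [CommRing R] [Algebra F R] {u v : R}
    (hu : u * u = 0) (hv : v * v = 0) (p q p' q' : F) :
    (p • u + q • v) * (p' • u + q' • v) = (p * q' + p' * q) • (u * v) := by
  simp only [Algebra.smul_def, map_add, map_mul]
  linear_combination (algebraMap F R p * algebraMap F R p') * hu +
    (algebraMap F R q * algebraMap F R q') * hv

theorem mul_dotProduct_eq_zero_of_sq_eq_zero (h2 : (2 : F) ≠ 0) {c : Fin 3 → F}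
    (hc : (∑ i, c i • ntGen (B32 (F := F)) i) ^ 2 = 0) {a b : Fin 3 → F}
    (h0 : a 0 * b 0 = 0) (h1 : a 1 * b 1 = 0)
    (hr : 2 * (a 2 * b 2) = a 0 * b 2 + a 2 * b 0 + (a 1 * b 2 + a 2 * b 1)) :
    (c ⬝ᵥ a) * (c ⬝ᵥ b) = 0 := by
  let u : DualNumber (DualNumber F) := TrivSqZeroExt.inl DualNumber.eps
  let v : DualNumber (DualNumber F) := DualNumber.eps
  have hu : u * u = 0 := by simp [u, ← TrivSqZeroExt.inl_mul, DualNumber.eps_mul_eps]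
  have hv : v * v = 0 := by exact DualNumber.eps_mul_eps
  have huv : ∀ d : F, d • (u * v) = 0 → d = 0 := fun d h => by
    simpa [u, v] using congrArg (fun x => x.snd.snd) h
  have hmul := smul_add_smul_mul_smul_add_smul (F := F) (R := DualNumber (DualNumber F)) hu hv
  let y i := a i • u + b i • v
  let φ := NTAlg.lift (B32 (F := F)) y <|
    B32_relations (by simp [y, sq, hmul, h0]) (by simp [y, sq, hmul, h1])
      (by simp only [y, sq, hmul, ← add_smul]; congr 1; linear_combination hr)
  have himage : φ (∑ i, c i • ntGen (B32 (F := F)) i) = (c ⬝ᵥ a) • u + (c ⬝ᵥ b) • v := by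
    simp [φ, y, dotProduct, Fin.sum_univ_three]
    module
  have hsq := congrArg φ hc
  rw [map_pow, himage, map_zero, sq, hmul, ← two_mul] at hsq
  exact (mul_eq_zero.mp (huv _ hsq)).resolve_left h2

theorem coeff_two_eq_zero_of_sq_eq_zero (h2 : (2 : F) ≠ 0) {c : Fin 3 → F}
    (hc : (∑ i, c i • ntGen (B32 (F := F)) i) ^ 2 = 0) : c 2 = 0 := by
  -- the three test pairs read off the coefficients of `Y₀Y₁`, `Y₀Y₂` and `Y₁Y₂` in the square
  have e01 := mul_dotProduct_eq_zero_of_sq_eq_zero h2 hc (a := ![1, 0, 0]) (b := ![0, 1, 0])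
    (by simp) (by simp) (by simp)
  have e02 := mul_dotProduct_eq_zero_of_sq_eq_zero h2 hc (a := ![2, 0, 1]) (b := ![0, 0, 1])
    (by simp) (by simp) (by simp [Matrix.cons_val])
  have e12 := mul_dotProduct_eq_zero_of_sq_eq_zero h2 hc (a := ![0, 2, 1]) (b := ![0, 0, 1])
    (by simp) (by simp) (by simp [Matrix.cons_val])
  simp only [dotProduct, Fin.sum_univ_three, Matrix.cons_val, Matrix.cons_val_zero,
    Matrix.cons_val_one, mul_zero, mul_one, add_zero, zero_add] at e01 e02 e12
  have hcube : c 2 ^ 3 = 0 := by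
    linear_combination 4 * c 2 * e01 - 2 * c 1 * e02 + c 2 * e12
  exact pow_eq_zero_iff (by norm_num) |>.mp hcube

/-- There is no degree-preserving isomorphism `A(0₃) → A(B_{3,2})`. -/
theorem stmt8 (h2 : (2 : F) ≠ 0) :
    ¬ NTIso (0 : Matrix (Fin 3) (Fin 3) F) (B32 : Matrix (Fin 3) (Fin 3) F) := by
  rintro ⟨e, Γ, hΓ⟩
  have hΓ2 (j : Fin 3) : Γ 2 j = 0 := by
    refine coeff_two_eq_zero_of_sq_eq_zero (c := fun i => Γ i j) h2 ?_
    rw [← hΓ j, ← map_pow, ntGen_sq]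
    simp
  let g : NTAlg B32 →ₐ[F] DualNumber F := NTAlg.lift B32 ![0, 0, DualNumber.eps]
    (B32_relations (by simp) (by simp) (by simp [sq]))
  have hge (j : Fin 3) : g.comp e.toAlgHom (ntGen 0 j) = 0 := by
    simp [g, hΓ, Fin.sum_univ_three, hΓ2]
  have heps : (DualNumber.eps : DualNumber F) ∈ (⊥ : Subalgebra F (DualNumber F)) := by
    simpa [g] using NTAlg.mem_bot_of_forall_ntGen_eq_zero _ _ hge (e.symm (ntGen B32 2))
  exact DualNumber.eps_notMem_bot heps
end
end

section
/- Let F be a field of characteristic ≠ 2 and U = [u_{ij}] a 3×3 strictly lower triangular matrix over F with u_{32} ≠ 0 and Δ := 2u_{31} + u_{32}u_{21} ≠ 0. Then A(U) ≅ A(B_{3,2}); explicitly, the invertible matrix Γ with rows (2/Δ, u_{21}/Δ, 0), (0, 1/u_{32}, 0), (0, 0, 1) defines an isomorphism A(U) → A(B_{3,2}) via X_j ↦ Σ_i Γ_{ij} Y_i. -/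
/-!
An algebra map out of `A(T)` is the same as a family of elements satisfying the defining
relations of `A(T)`. If `Γ` and `Γ'` are mutually inverse matrices and the substitutions
`X_j ↦ ∑ᵢ Γᵢⱼ Yᵢ` and `Y_j ↦ ∑ᵢ Γ'ᵢⱼ Xᵢ` both respect the relations, the two induced maps are
inverse to each other, because on generators their composites are the substitutions by
`Γ * Γ' = 1` and `Γ' * Γ = 1`. For the given `Γ` (with inverse rows `(Δ/2, -u₂₁u₃₂/2, 0)`,
`(0, u₃₂, 0)`, `(0, 0, 1)`) the relations come down to the scalar identities
`u₃₁ · 2/Δ + u₃₂ · u₂₁/Δ = 1` and `Δ/2 - u₂₁u₃₂/2 = u₃₁`.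
-/

open scoped BigOperators

noncomputable section

variable {F : Type} [Field F]

open MvPolynomial

section Presentation

variable {n : ℕ} {A : Type*} [CommRing A] [Algebra F A]

def NTRelations (T : Matrix (Fin n) (Fin n) F) (v : Fin n → A) : Prop :=
  ∀ i, v i ^ 2 = ∑ j ∈ Finset.univ.filter (· < i), T i j • v j * v i

theorem ntIdeal_le_ker_aeval {T : Matrix (Fin n) (Fin n) F} {v : Fin n → A}
    (hv : NTRelations T v) : ntIdeal T ≤ RingHom.ker (aeval v) := by
  rw [ntIdeal, Ideal.span_le]
  rintro _ ⟨i, rfl⟩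
  simp [hv i, Algebra.smul_def]

def ntLift (T : Matrix (Fin n) (Fin n) F) (v : Fin n → A) (hv : NTRelations T v) :
    NTAlg T →ₐ[F] A :=
  Ideal.Quotient.liftₐ _ (aeval v) fun _ hp => ntIdeal_le_ker_aeval hv hp

@[simp]
theorem ntLift_ntGen (T : Matrix (Fin n) (Fin n) F) (v : Fin n → A) (hv : NTRelations T v)
    (i : Fin n) : ntLift T v hv (ntGen T i) = v i :=
  aeval_X v i

theorem ntAlgHom_ext {T : Matrix (Fin n) (Fin n) F} {φ ψ : NTAlg T →ₐ[F] A}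
    (h : ∀ i, φ (ntGen T i) = ψ (ntGen T i)) : φ = ψ :=
  Ideal.Quotient.algHom_ext _ (MvPolynomial.algHom_ext h)

theorem ntRelations_ntGen (T : Matrix (Fin n) (Fin n) F) : NTRelations T (ntGen T) := by
  intro i
  have hrel : X i ^ 2 - ∑ j ∈ Finset.univ.filter (· < i), C (T i j) * X j * X i ∈ ntIdeal T :=
    Ideal.subset_span ⟨i, rfl⟩
  rw [← Ideal.Quotient.eq_zero_iff_mem, map_sub, sub_eq_zero] at hrel
  simp only [map_pow, map_sum, map_mul] at hrel
  simp only [Algebra.smul_def]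
  exact hrel

end Presentation

section LinearChange

variable {n : ℕ}

def linSubst (Γ : Matrix (Fin n) (Fin n) F) (S : Matrix (Fin n) (Fin n) F) (j : Fin n) :
    NTAlg S :=
  ∑ i, Γ i j • ntGen S i

theorem linSubst_one (S : Matrix (Fin n) (Fin n) F) : linSubst 1 S = ntGen S := by
  funext j
  simp [linSubst, Matrix.one_apply]

theorem map_linSubst {T S : Matrix (Fin n) (Fin n) F} {Γ : Matrix (Fin n) (Fin n) F}
    (φ : NTAlg T →ₐ[F] NTAlg S) (hφ : ∀ i, φ (ntGen T i) = linSubst Γ S i)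
    (Γ' : Matrix (Fin n) (Fin n) F) (j : Fin n) :
    φ (linSubst Γ' T j) = linSubst (Γ * Γ') S j := by
  simp only [linSubst, map_sum, map_smul, hφ, Finset.smul_sum, smul_smul, Matrix.mul_apply,
    Finset.sum_smul]
  rw [Finset.sum_comm]
  simp_rw [mul_comm]

def ntEquivOfMatrix {T S : Matrix (Fin n) (Fin n) F} (Γ Γ' : Matrix (Fin n) (Fin n) F)
    (hΓ : NTRelations T (linSubst Γ S)) (hΓ' : NTRelations S (linSubst Γ' T))
    (h : Γ * Γ' = 1) (h' : Γ' * Γ = 1) : NTAlg T ≃ₐ[F] NTAlg S :=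
  AlgEquiv.ofAlgHom (ntLift T _ hΓ) (ntLift S _ hΓ')
    (ntAlgHom_ext fun j => by
      simp [map_linSubst _ (ntLift_ntGen T _ hΓ), h, linSubst_one])
    (ntAlgHom_ext fun j => by
      simp [map_linSubst _ (ntLift_ntGen S _ hΓ'), h', linSubst_one])

theorem ntEquivOfMatrix_ntGen {T S : Matrix (Fin n) (Fin n) F} (Γ Γ' : Matrix (Fin n) (Fin n) F)
    (hΓ : NTRelations T (linSubst Γ S)) (hΓ' : NTRelations S (linSubst Γ' T))
    (h : Γ * Γ' = 1) (h' : Γ' * Γ = 1) (j : Fin n) :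
    ntEquivOfMatrix Γ Γ' hΓ hΓ' h h' (ntGen T j) = ∑ i, Γ i j • ntGen S i :=
  ntLift_ntGen T _ hΓ j

end LinearChange

section ThreeByThree

variable {A : Type*} [CommRing A] [Algebra F A]

theorem ntRelations_fin_three_iff {T : Matrix (Fin 3) (Fin 3) F} {v : Fin 3 → A} :
    NTRelations T v ↔ v 0 ^ 2 = 0 ∧ v 1 ^ 2 = T 1 0 • (v 0 * v 1) ∧
      v 2 ^ 2 = T 2 0 • (v 0 * v 2) + T 2 1 • (v 1 * v 2) := by
  simp [NTRelations, Fin.forall_fin_succ, Finset.sum_filter, Fin.sum_univ_three]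

theorem ntRelations_B32_iff {y : Fin 3 → A} :
    NTRelations (B32 (F := F)) y ↔ y 0 ^ 2 = 0 ∧ y 1 ^ 2 = 0 ∧ y 2 ^ 2 = y 0 * y 2 + y 1 * y 2 := by
  simp [ntRelations_fin_three_iff, B32]

theorem NTRelations.fromB32 {U : Matrix (Fin 3) (Fin 3) F} (h32 : U 2 1 ≠ 0)
    (hΔ : 2 * U 2 0 + U 2 1 * U 1 0 ≠ 0) {y : Fin 3 → A} (hy : NTRelations (B32 (F := F)) y) :
    NTRelations U ![(2 / (2 * U 2 0 + U 2 1 * U 1 0)) • y 0,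
      (U 1 0 / (2 * U 2 0 + U 2 1 * U 1 0)) • y 0 + (1 / U 2 1) • y 1, y 2] := by
  obtain ⟨hy0, hy1, hy2⟩ := ntRelations_B32_iff.1 hy
  set Δ := 2 * U 2 0 + U 2 1 * U 1 0
  have hΔ' : U 2 0 * (2 / Δ) + U 2 1 * (U 1 0 / Δ) = 1 := by field_simp; ring
  have h32' : U 2 1 * (1 / U 2 1) = 1 := by field_simp
  refine ntRelations_fin_three_iff.2 ⟨?_, ?_, ?_⟩ <;>
    simp only [Matrix.cons_val_zero, Matrix.cons_val_one, Matrix.cons_val_two, Matrix.tail_cons,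
      Matrix.head_cons, sq, add_mul, mul_add, smul_mul_assoc, mul_smul_comm, smul_add,
      mul_comm (y 1) (y 0)] at hy0 hy1 hy2 ⊢
  · simp [hy0]
  · simp only [hy0, hy1, smul_zero, zero_add, add_zero]
    module
  · linear_combination (norm := module) hy2 - hΔ' • (y 0 * y 2) - h32' • (y 1 * y 2)

theorem NTRelations.toB32 {U : Matrix (Fin 3) (Fin 3) F} (h2 : (2 : F) ≠ 0) {x : Fin 3 → A}
    (hx : NTRelations U x) :
    NTRelations (B32 (F := F)) ![((2 * U 2 0 + U 2 1 * U 1 0) / 2) • x 0,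
      (-(U 1 0 * U 2 1) / 2) • x 0 + U 2 1 • x 1, x 2] := by
  obtain ⟨hx0, hx1, hx2⟩ := ntRelations_fin_three_iff.1 hx
  have hhalf : (2 * U 2 0 + U 2 1 * U 1 0) / 2 + -(U 1 0 * U 2 1) / 2 = U 2 0 := by
    field_simp; ring
  refine ntRelations_B32_iff.2 ⟨?_, ?_, ?_⟩ <;>
    simp only [Matrix.cons_val_zero, Matrix.cons_val_one, Matrix.cons_val_two, Matrix.tail_cons,
      Matrix.head_cons, sq, add_mul, mul_add, smul_mul_assoc, mul_smul_comm, smul_add,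
      mul_comm (x 1) (x 0)] at hx0 hx1 hx2 ⊢
  · simp [hx0]
  · have hcancel : 2 * (-(U 1 0 * U 2 1) / 2) * U 2 1 + U 2 1 ^ 2 * U 1 0 = 0 := by
      field_simp; ring
    rw [hx0, hx1]
    linear_combination (norm := module) hcancel • (x 0 * x 1)
  · linear_combination (norm := module) hx2 - hhalf • (x 0 * x 2)

end ThreeByThree

theorem stmt9_general (h2 : (2 : F) ≠ 0) (U : Matrix (Fin 3) (Fin 3) F)
    (h32 : U 2 1 ≠ 0) (hΔ : 2 * U 2 0 + U 2 1 * U 1 0 ≠ 0) :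
    ∃ e : NTAlg U ≃ₐ[F] NTAlg (B32 : Matrix (Fin 3) (Fin 3) F),
      ∀ j : Fin 3, e (ntGen U j) =
        ∑ i : Fin 3,
          (!![2 / (2 * U 2 0 + U 2 1 * U 1 0), U 1 0 / (2 * U 2 0 + U 2 1 * U 1 0), 0;
              0, 1 / U 2 1, 0;
              0, 0, 1] : Matrix (Fin 3) (Fin 3) F) i j • ntGen B32 i := by
  set Δ := 2 * U 2 0 + U 2 1 * U 1 0
  set Γ : Matrix (Fin 3) (Fin 3) F := !![2 / Δ, U 1 0 / Δ, 0; 0, 1 / U 2 1, 0; 0, 0, 1]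
  set Γ' : Matrix (Fin 3) (Fin 3) F := !![Δ / 2, -(U 1 0 * U 2 1) / 2, 0; 0, U 2 1, 0; 0, 0, 1]
  have hΓ : NTRelations U (linSubst Γ B32) := by
    convert (ntRelations_ntGen (B32 (F := F))).fromB32 h32 hΔ using 1
    funext j; fin_cases j <;> simp [linSubst, Fin.sum_univ_three, Γ, Δ]
  have hΓ' : NTRelations (B32 (F := F)) (linSubst Γ' U) := by
    convert (ntRelations_ntGen U).toB32 h2 using 1
    funext j; fin_cases j <;> simp [linSubst, Fin.sum_univ_three, Γ', Δ]
  have hmul : Γ * Γ' = 1 := by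
    ext i j; fin_cases i <;> fin_cases j <;> simp [Matrix.mul_apply, Fin.sum_univ_three, Γ, Γ'] <;>
      grind
  have hmul' : Γ' * Γ = 1 := mul_eq_one_comm.mp hmul
  exact ⟨ntEquivOfMatrix Γ Γ' hΓ hΓ' hmul hmul', ntEquivOfMatrix_ntGen Γ Γ' hΓ hΓ' hmul hmul'⟩

/-- If `u₃₂ ≠ 0` and `Δ = 2u₃₁ + u₃₂u₂₁ ≠ 0`, then `A(U) ≅ A(B_{3,2})` via the explicit
matrix `Γ` with rows `(2/Δ, u₂₁/Δ, 0)`, `(0, 1/u₃₂, 0)`, `(0, 0, 1)`. -/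
theorem stmt9 (h2 : (2 : F) ≠ 0) (U : Matrix (Fin 3) (Fin 3) F) (hU : SLT U)
    (h32 : U 2 1 ≠ 0) (hΔ : 2 * U 2 0 + U 2 1 * U 1 0 ≠ 0) :
    ∃ e : NTAlg U ≃ₐ[F] NTAlg (B32 : Matrix (Fin 3) (Fin 3) F),
      ∀ j : Fin 3, e (ntGen U j) =
        ∑ i : Fin 3,
          (!![2 / (2 * U 2 0 + U 2 1 * U 1 0), U 1 0 / (2 * U 2 0 + U 2 1 * U 1 0), 0;
              0, 1 / U 2 1, 0;
              0, 0, 1] : Matrix (Fin 3) (Fin 3) F) i j • ntGen B32 i :=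
  stmt9_general h2 U h32 hΔ
end
end
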